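/- arXiv:1009.5632 — 6 statements merged into one kernel-verified Lean document; each statement's English description precedes it below -/
import Mathlib

section
/- With u_± = (1−ξ²) + (x−y)/2 ± i√Δ where Δ = (1−ξ²)(ξ²−xy) − (x−y)²/4 ≥ 0, the following modulus identities hold: |u_±|² = (1−ξ²)(1+x)(1−y), |u_± − x + y|² = (1−ξ²)(1−x)(1+y), |1+x−u_±|² = ξ²(1+x)(1+y), and |1−y−u_±|² = ξ²(1−x)(1−y). -/
open Complex

lemma norm_sq_ofReal_add_mul_I_sqrt_sub {a c ε Δ : ℝ} (hε : ε ^ 2 = 1) (hΔ : 0 ≤ Δ) :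
    ‖(a : ℂ) + ε * I * Real.sqrt Δ - c‖ ^ 2 = (a - c) ^ 2 + Δ := by
  have hsqrt : Real.sqrt Δ ^ 2 = Δ := Real.sq_sqrt hΔ
  rw [Complex.sq_norm, normSq_apply]
  simp only [sub_re, sub_im, add_re, add_im, mul_re, mul_im, ofReal_re, ofReal_im, I_re, I_im]
  linear_combination ε ^ 2 * hsqrt + Δ * hε

theorem stmt2_general (x y ξ : ℝ)
    (Δ : ℝ) (hΔdef : Δ = (1 - ξ ^ 2) * (ξ ^ 2 - x * y) - (x - y) ^ 2 / 4)
    (hΔ : 0 ≤ Δ) :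
    ∀ ε : ℝ, (ε = 1 ∨ ε = -1) →
      ∀ u : ℂ, u = ((1 - ξ ^ 2 : ℝ) : ℂ) + ((x - y) / 2 : ℝ)
          + ε * Complex.I * Real.sqrt Δ →
        ‖u‖ ^ 2 = (1 - ξ ^ 2) * (1 + x) * (1 - y) ∧
        ‖u - x + y‖ ^ 2 = (1 - ξ ^ 2) * (1 - x) * (1 + y) ∧
        ‖1 + x - u‖ ^ 2 = ξ ^ 2 * (1 + x) * (1 + y) ∧
        ‖1 - y - u‖ ^ 2 = ξ ^ 2 * (1 - x) * (1 - y) := by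
  intro ε hε u hu
  have hε2 : ε ^ 2 = 1 := by rcases hε with rfl | rfl <;> norm_num
  -- All four moduli are distances `|u - c|` from `u` to a real point `c`.
  have dist_sq (c : ℝ) : ‖u - c‖ ^ 2 = (1 - ξ ^ 2 + (x - y) / 2 - c) ^ 2 + Δ := by
    rw [hu, ← ofReal_add]
    exact norm_sq_ofReal_add_mul_I_sqrt_sub hε2 hΔ
  refine ⟨?_, ?_, ?_, ?_⟩
  · simpa using (dist_sq 0).trans (by rw [hΔdef]; ring)
  · rw [sub_add, ← ofReal_sub, dist_sq, hΔdef]; ring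
  · rw [norm_sub_rev, ← ofReal_one, ← ofReal_add, dist_sq, hΔdef]; ring
  · rw [norm_sub_rev, ← ofReal_one, ← ofReal_sub, dist_sq, hΔdef]; ring

/-- Modulus identities for `u_± = (1-ξ²) + (x-y)/2 ± i√Δ`:
`|u_±|² = (1-ξ²)(1+x)(1-y)`, `|u_± - x + y|² = (1-ξ²)(1-x)(1+y)`,
`|1+x-u_±|² = ξ²(1+x)(1+y)`, `|1-y-u_±|² = ξ²(1-x)(1-y)`. -/
theorem stmt2 (x y ξ : ℝ) (hx : x ∈ Set.Ioo (-1 : ℝ) 1) (hy : y ∈ Set.Ioo (-1 : ℝ) 1)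
    (hξ : ξ ∈ Set.Ioo (0 : ℝ) 1)
    (Δ : ℝ) (hΔdef : Δ = (1 - ξ ^ 2) * (ξ ^ 2 - x * y) - (x - y) ^ 2 / 4)
    (hΔ : 0 ≤ Δ) :
    ∀ ε : ℝ, (ε = 1 ∨ ε = -1) →
      ∀ u : ℂ, u = ((1 - ξ ^ 2 : ℝ) : ℂ) + ((x - y) / 2 : ℝ)
          + ε * Complex.I * Real.sqrt Δ →
        ‖u‖ ^ 2 = (1 - ξ ^ 2) * (1 + x) * (1 - y) ∧
        ‖u - x + y‖ ^ 2 = (1 - ξ ^ 2) * (1 - x) * (1 + y) ∧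
        ‖1 + x - u‖ ^ 2 = ξ ^ 2 * (1 + x) * (1 + y) ∧
        ‖1 - y - u‖ ^ 2 = ξ ^ 2 * (1 - x) * (1 - y) :=
  stmt2_general x y ξ Δ hΔdef hΔ
end

section
/- For x, y ∈ (−1,1), ξ ∈ (0,1) with Δ = (1−ξ²)(ξ²−xy) − (x−y)²/4 ≥ 0 and u_± = (1−ξ²) + (x−y)/2 ± i√Δ, the real part of the function f(x,y,u_±) (obtained by summing (2+x−y)ln ξ + (y−x)ln η with η² = 1−ξ², the four terms ½(1±x)ln(1±x), ½(1±y)ln(1±y), minus (1+x)ln|1+x−u_±|, minus (1−y)ln|1−y−u_±|, minus (y−x)ln|u_±−x+y|) equals zero. -/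
open Complex

/-!
The three moduli have closed forms: whenever `Re u = (1-ξ²) + (x-y)/2` and `(Im u)² = Δ`,
`|1+x-u|² = ξ²(1+x)(1+y)`, `|1-y-u|² = ξ²(1-x)(1-y)` and `|u-x+y|² = (1-ξ²)(1-x)(1+y)`.
Taking logarithms, every term of `Re f` becomes a combination of `ln ξ`, `ln(1-ξ²)` and
`ln(1±x)`, `ln(1±y)`, and the coefficients cancel.
-/

section ModuliSquared

variable {x y ξ : ℝ} {u : ℂ} (hre : u.re = 1 - ξ ^ 2 + (x - y) / 2)
  (him : u.im ^ 2 = (1 - ξ ^ 2) * (ξ ^ 2 - x * y) - (x - y) ^ 2 / 4)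
include hre him

theorem normSq_one_add_sub : normSq (1 + x - u) = ξ ^ 2 * (1 + x) * (1 + y) := by
  simp only [normSq_apply, sub_re, add_re, sub_im, add_im, one_re, one_im, ofReal_re,
    ofReal_im, hre]
  linear_combination him

theorem normSq_one_sub_sub : normSq (1 - y - u) = ξ ^ 2 * (1 - x) * (1 - y) := by
  simp only [normSq_apply, sub_re, sub_im, one_re, one_im, ofReal_re, ofReal_im, hre]
  linear_combination him

theorem normSq_sub_add : normSq (u - x + y) = (1 - ξ ^ 2) * (1 - x) * (1 + y) := by
  simp only [normSq_apply, sub_re, add_re, sub_im, add_im, ofReal_re, ofReal_im, hre]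
  linear_combination him

end ModuliSquared

theorem Real.log_norm_eq_half_log_normSq (z : ℂ) : Real.log ‖z‖ = Real.log (normSq z) / 2 := by
  rw [norm_def, Real.log_sqrt (normSq_nonneg z)]

theorem Real.log_mul_mul {a b c : ℝ} (ha : a ≠ 0) (hb : b ≠ 0) (hc : c ≠ 0) :
    Real.log (a * b * c) = Real.log a + Real.log b + Real.log c := by
  rw [Real.log_mul (mul_ne_zero ha hb) hc, Real.log_mul ha hb]

/-- The real part of `f(x,y,u_±)` vanishes: the combination of logarithms
`(2+x-y)ln ξ + (y-x)ln η + ½(1-x)ln(1-x) + ½(1+x)ln(1+x) + ½(1-y)ln(1-y)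
 + ½(1+y)ln(1+y) - (1+x)ln|1+x-u_±| - (1-y)ln|1-y-u_±| - (y-x)ln|u_±-x+y|`
equals zero, where `η = √(1-ξ²)` and `u_± = (1-ξ²) + (x-y)/2 ± i√Δ`. -/
theorem stmt3 (x y ξ : ℝ) (hx : x ∈ Set.Ioo (-1 : ℝ) 1) (hy : y ∈ Set.Ioo (-1 : ℝ) 1)
    (hξ : ξ ∈ Set.Ioo (0 : ℝ) 1)
    (η : ℝ) (hη : η = Real.sqrt (1 - ξ ^ 2))
    (Δ : ℝ) (hΔdef : Δ = (1 - ξ ^ 2) * (ξ ^ 2 - x * y) - (x - y) ^ 2 / 4)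
    (hΔ : 0 ≤ Δ) :
    ∀ ε : ℝ, (ε = 1 ∨ ε = -1) →
      ∀ u : ℂ, u = ((1 - ξ ^ 2 : ℝ) : ℂ) + ((x - y) / 2 : ℝ)
          + ε * Complex.I * Real.sqrt Δ →
        (2 + x - y) * Real.log ξ + (y - x) * Real.log η
          + (1 - x) / 2 * Real.log (1 - x) + (1 + x) / 2 * Real.log (1 + x)
          + (1 - y) / 2 * Real.log (1 - y) + (1 + y) / 2 * Real.log (1 + y)
          - (1 + x) * Real.log (‖(1 + x - u : ℂ)‖)
          - (1 - y) * Real.log (‖(1 - y - u : ℂ)‖)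
          - (y - x) * Real.log (‖(u - x + y : ℂ)‖) = 0 := by
  intro ε hε u hu
  obtain ⟨hx₁, hx₂⟩ := hx
  obtain ⟨hy₁, hy₂⟩ := hy
  obtain ⟨hξ₀, hξ₁⟩ := hξ
  have h1ξ : (0 : ℝ) < 1 - ξ ^ 2 := by nlinarith
  have hre : u.re = 1 - ξ ^ 2 + (x - y) / 2 := by
    subst hu; simp only [add_re, mul_re, mul_im, I_re, I_im, ofReal_re, ofReal_im]; ring
  have him : u.im ^ 2 = (1 - ξ ^ 2) * (ξ ^ 2 - x * y) - (x - y) ^ 2 / 4 := by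
    have hu_im : u.im = ε * √Δ := by
      subst hu; simp only [add_im, mul_re, mul_im, I_re, I_im, ofReal_re, ofReal_im]; ring
    have hε_sq : ε ^ 2 = 1 := by rcases hε with rfl | rfl <;> norm_num
    rw [hu_im, mul_pow, hε_sq, Real.sq_sqrt hΔ, one_mul, hΔdef]
  have hξ2 : ξ ^ 2 ≠ 0 := pow_ne_zero 2 hξ₀.ne'
  simp only [Real.log_norm_eq_half_log_normSq, normSq_one_add_sub hre him,
    normSq_one_sub_sub hre him, normSq_sub_add hre him]
  rw [Real.log_mul_mul hξ2 (by linarith) (by linarith),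
    Real.log_mul_mul hξ2 (by linarith) (by linarith),
    Real.log_mul_mul h1ξ.ne' (by linarith) (by linarith),
    hη, Real.log_sqrt h1ξ.le, Real.log_pow]
  push_cast
  ring
end

section
/- In the diagonal case y = x with Δ = (1−ξ²)(ξ²−x²) > 0 and x ∈ (−1,1), ξ ∈ (0,1), define iφ(x) = ln[(2ξ²−1−x² + 2i√Δ)/(1−x²)] and i(ψ−ω)(x) = ln[(√(ξ²−x²) − i x√(1−ξ²))²/(ξ²(1−x²))]. Then φ'(x) = 2x√(1−ξ²)/((1−x²)√(ξ²−x²)) and (ψ−ω)'(x) = −2√(1−ξ²)/((1−x²)√(ξ²−x²)); in particular φ'(x) + x·(ψ−ω)'(x) = 0. -/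
/-!
With `r = √(ξ² - x²)` and `s = √(1 - ξ²)`, both arguments of the logarithm have the form
`w² / c` with `c > 0` and `Re w = r > 0`: namely `(r + i s)² / (1 - x²)` (as `r² + s² = 1 - x²`)
and `(r - i x s)² / (ξ² (1 - x²))`. Hence `φ = 2 arctan (s / r)` and
`ψ - ω = 2 arctan (-x s / r)` near every admissible `x`, and both derivatives follow from
`(arctan (f / g))' = (f' g - f g') / (f² + g²)`.
-/

open Complex

namespace Complex

theorem arg_sq_of_re_pos {w : ℂ} (hw : 0 < w.re) : arg (w ^ 2) = 2 * arg w := by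
  have hθ := abs_lt.1 (abs_arg_lt_pi_div_two_iff.2 (Or.inl hw))
  have hpolar : w ^ 2 = ((‖w‖ ^ 2 : ℝ) : ℂ) * exp ((2 * arg w : ℝ) * I) := by
    conv_lhs => rw [← norm_mul_exp_arg_mul_I w]
    rw [mul_pow, ← exp_nat_mul]
    push_cast
    ring_nf
  have hw0 : 0 < ‖w‖ := norm_pos_iff.2 fun h => by simp [h] at hw
  rw [hpolar, exp_mul_I,
    arg_mul_cos_add_sin_mul_I (by positivity) ⟨by linarith, by linarith⟩]

theorem arg_eq_arctan_of_re_pos {w : ℂ} (hw : 0 < w.re) : arg w = Real.arctan (w.im / w.re) := by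
  have hθ := abs_lt.1 (abs_arg_lt_pi_div_two_iff.2 (Or.inl hw))
  rw [← tan_arg, Real.arctan_tan hθ.1 hθ.2]

theorem im_log_sq_div_ofReal {w : ℂ} {c : ℝ} (hw : 0 < w.re) (hc : 0 < c) :
    (log (w ^ 2 / c)).im = 2 * Real.arctan (w.im / w.re) := by
  rw [log_im, div_eq_inv_mul, ← ofReal_inv, arg_real_mul _ (inv_pos.2 hc), arg_sq_of_re_pos hw,
    arg_eq_arctan_of_re_pos hw]

end Complex

open Real Topology

theorem HasDerivAt.arctan_div {f g : ℝ → ℝ} {f' g' x : ℝ} (hf : HasDerivAt f f' x)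
    (hg : HasDerivAt g g' x) (hx : g x ≠ 0) :
    HasDerivAt (fun y => Real.arctan (f y / g y))
      ((f' * g x - f x * g') / (f x ^ 2 + g x ^ 2)) x := by
  refine (hf.div hg hx).arctan.congr_deriv ?_
  simp only [Pi.div_apply]
  field_simp
  ring

theorem hasDerivAt_sqrt_sub_sq {c x : ℝ} (hx : x ^ 2 < c) :
    HasDerivAt (fun y => √(c - y ^ 2)) (-x / √(c - x ^ 2)) x := by
  convert ((hasDerivAt_pow 2 x).const_sub c).sqrt (by linarith) using 1
  field_simp
  ring

noncomputable def phiAngle (ξ x : ℝ) : ℝ := 2 * Real.arctan (√(1 - ξ ^ 2) / √(ξ ^ 2 - x ^ 2))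

noncomputable def psiOmegaAngle (ξ x : ℝ) : ℝ :=
  2 * Real.arctan (-(x * √(1 - ξ ^ 2)) / √(ξ ^ 2 - x ^ 2))

section Angles

variable {ξ x : ℝ}

theorem im_log_eq_phiAngle (hξ : ξ ^ 2 < 1) (hx : x ^ 2 < ξ ^ 2) :
    (Complex.log ((((2 * ξ ^ 2 - 1 - x ^ 2 : ℝ) : ℂ)
        + 2 * I * √((1 - ξ ^ 2) * (ξ ^ 2 - x ^ 2))) / ((1 - x ^ 2 : ℝ) : ℂ))).im
      = phiAngle ξ x := by
  have hs2 : (√(1 - ξ ^ 2) : ℂ) ^ 2 = 1 - ξ ^ 2 := by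
    exact_mod_cast Real.sq_sqrt (by linarith)
  have hr2 : (√(ξ ^ 2 - x ^ 2) : ℂ) ^ 2 = ξ ^ 2 - x ^ 2 := by
    exact_mod_cast Real.sq_sqrt (by linarith)
  have hsq : ((2 * ξ ^ 2 - 1 - x ^ 2 : ℝ) : ℂ) + 2 * I * √((1 - ξ ^ 2) * (ξ ^ 2 - x ^ 2))
      = (√(ξ ^ 2 - x ^ 2) + √(1 - ξ ^ 2) * I) ^ 2 := by
    rw [Real.sqrt_mul (by linarith)]
    push_cast
    linear_combination -hr2 + hs2 - (√(1 - ξ ^ 2) : ℂ) ^ 2 * I_sq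
  have hx1 : 0 < 1 - x ^ 2 := by linarith
  rw [hsq, im_log_sq_div_ofReal (by simpa using Real.sqrt_pos.2 (sub_pos.2 hx)) hx1,
    phiAngle]
  simp

theorem im_log_eq_psiOmegaAngle (hξ : ξ ^ 2 < 1) (hx : x ^ 2 < ξ ^ 2) :
    (Complex.log ((((√(ξ ^ 2 - x ^ 2) : ℝ) : ℂ) - I * x * √(1 - ξ ^ 2)) ^ 2
        / ((ξ ^ 2 * (1 - x ^ 2) : ℝ) : ℂ))).im
      = psiOmegaAngle ξ x := by
  have hc : 0 < ξ ^ 2 * (1 - x ^ 2) := mul_pos (by nlinarith) (by linarith)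
  rw [im_log_sq_div_ofReal (by simpa using Real.sqrt_pos.2 (sub_pos.2 hx)) hc, psiOmegaAngle]
  simp

theorem hasDerivAt_phiAngle (hξ : ξ ^ 2 < 1) (hx : x ^ 2 < ξ ^ 2) :
    HasDerivAt (phiAngle ξ) (2 * x * √(1 - ξ ^ 2) / ((1 - x ^ 2) * √(ξ ^ 2 - x ^ 2))) x := by
  have hs2 : √(1 - ξ ^ 2) ^ 2 = 1 - ξ ^ 2 := Real.sq_sqrt (by linarith)
  have hr2 : √(ξ ^ 2 - x ^ 2) ^ 2 = ξ ^ 2 - x ^ 2 := Real.sq_sqrt (by linarith)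
  have hr0 : 0 < √(ξ ^ 2 - x ^ 2) := Real.sqrt_pos.2 (by linarith)
  have hx1 : 0 < 1 - x ^ 2 := by linarith
  unfold phiAngle
  refine (((hasDerivAt_const x _).arctan_div (hasDerivAt_sqrt_sub_sq hx)
    hr0.ne').const_mul 2).congr_deriv ?_
  field_simp
  linear_combination -(x * √(1 - ξ ^ 2)) * (hr2 + hs2)

theorem hasDerivAt_psiOmegaAngle (hξ : ξ ^ 2 < 1) (hx : x ^ 2 < ξ ^ 2) :
    HasDerivAt (psiOmegaAngle ξ) (-(2 * √(1 - ξ ^ 2) / ((1 - x ^ 2) * √(ξ ^ 2 - x ^ 2)))) x := by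
  have hs2 : √(1 - ξ ^ 2) ^ 2 = 1 - ξ ^ 2 := Real.sq_sqrt (by linarith)
  have hr2 : √(ξ ^ 2 - x ^ 2) ^ 2 = ξ ^ 2 - x ^ 2 := Real.sq_sqrt (by linarith)
  have hr0 : 0 < √(ξ ^ 2 - x ^ 2) := Real.sqrt_pos.2 (by linarith)
  have hx1 : 0 < 1 - x ^ 2 := by linarith
  unfold psiOmegaAngle
  have hf : HasDerivAt (fun y => -(y * √(1 - ξ ^ 2))) (-√(1 - ξ ^ 2)) x :=
    (hasDerivAt_mul_const _).neg
  refine ((hf.arctan_div (hasDerivAt_sqrt_sub_sq hx)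
    hr0.ne').const_mul 2).congr_deriv ?_
  field_simp
  linear_combination √(1 - ξ ^ 2) * x ^ 2 * (hr2 + hs2)

end Angles

/-- Diagonal case `y = x`: with `Δ(x) = (1-ξ²)(ξ²-x²)`, the angles
`φ(x) = Im log[(2ξ²-1-x² + 2i√Δ)/(1-x²)]` and
`(ψ-ω)(x) = Im log[(√(ξ²-x²) - i x√(1-ξ²))²/(ξ²(1-x²))]` satisfy
`φ'(x) = 2x√(1-ξ²)/((1-x²)√(ξ²-x²))`,
`(ψ-ω)'(x) = -2√(1-ξ²)/((1-x²)√(ξ²-x²))`, hence `φ' + x·(ψ-ω)' = 0`. -/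
theorem stmt8 (ξ : ℝ) (hξ : ξ ∈ Set.Ioo (0 : ℝ) 1)
    (φ ψω : ℝ → ℝ)
    (hφ : ∀ x : ℝ, φ x =
      (Complex.log ((((2 * ξ ^ 2 - 1 - x ^ 2 : ℝ) : ℂ)
          + 2 * Complex.I * Real.sqrt ((1 - ξ ^ 2) * (ξ ^ 2 - x ^ 2)))
        / ((1 - x ^ 2 : ℝ) : ℂ))).im)
    (hψω : ∀ x : ℝ, ψω x =
      (Complex.log ((((Real.sqrt (ξ ^ 2 - x ^ 2) : ℝ) : ℂ)
            - Complex.I * x * Real.sqrt (1 - ξ ^ 2)) ^ 2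
        / ((ξ ^ 2 * (1 - x ^ 2) : ℝ) : ℂ))).im) :
    ∀ x : ℝ, x ∈ Set.Ioo (-1 : ℝ) 1 → x ^ 2 < ξ ^ 2 →
      deriv φ x = 2 * x * Real.sqrt (1 - ξ ^ 2)
          / ((1 - x ^ 2) * Real.sqrt (ξ ^ 2 - x ^ 2)) ∧
      deriv ψω x = -(2 * Real.sqrt (1 - ξ ^ 2)
          / ((1 - x ^ 2) * Real.sqrt (ξ ^ 2 - x ^ 2))) ∧
      deriv φ x + x * deriv ψω x = 0 := by
  intro x _ hx
  have hξ2 : ξ ^ 2 < 1 := by nlinarith [hξ.1, hξ.2]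
  have hnhds : {y : ℝ | y ^ 2 < ξ ^ 2} ∈ 𝓝 x :=
    (isOpen_lt (continuous_pow 2) continuous_const).mem_nhds hx
  have hdφ := (hasDerivAt_phiAngle hξ2 hx).congr_of_eventuallyEq <| by
    filter_upwards [hnhds] with y hy using (hφ y).trans (im_log_eq_phiAngle hξ2 hy)
  have hdψω := (hasDerivAt_psiOmegaAngle hξ2 hx).congr_of_eventuallyEq <| by
    filter_upwards [hnhds] with y hy using (hψω y).trans (im_log_eq_psiOmegaAngle hξ2 hy)
  refine ⟨hdφ.deriv, hdψω.deriv, ?_⟩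
  rw [hdφ.deriv, hdψω.deriv]
  ring
end

section
/- Let J, n, k ∈ ℝ³ with |n| = |k| = 1 and J·J = J². Define Δ(ξ²)·J² := (1−ξ²)ξ²J² + ξ²(n·J)(k·J) − ¼((n+k)·J)². Then at ξ²₊ = (1+(n·k))/2 one has J²Δ = ¼ (J·(n ∧ k))², where ∧ denotes the cross product. -/
open Matrix

/-! The squared triple product `(J·(n ∧ k))²` is the Gram determinant of `J, n, k`. For unit `n, k`
and `t = (1 + n·k)/2`, so that `(1 - t)t = (1 - (n·k)²)/4`, the quantity `4 J²Δ(t)` expands to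
exactly that determinant. -/

theorem sq_dotProduct_cross_eq_gram {R : Type*} [CommRing R] (u v w : Fin 3 → R) :
    (u ⬝ᵥ v ⨯₃ w) ^ 2 =
      (u ⬝ᵥ u) * ((v ⬝ᵥ v) * (w ⬝ᵥ w) - (v ⬝ᵥ w) ^ 2) - (u ⬝ᵥ v) ^ 2 * (w ⬝ᵥ w)
        - (u ⬝ᵥ w) ^ 2 * (v ⬝ᵥ v) + 2 * (u ⬝ᵥ v) * (u ⬝ᵥ w) * (v ⬝ᵥ w) := by
  set M : Matrix (Fin 3) (Fin 3) R := Matrix.of ![u, v, w]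
  have hgram : M * Mᵀ =
      !![u ⬝ᵥ u, u ⬝ᵥ v, u ⬝ᵥ w; v ⬝ᵥ u, v ⬝ᵥ v, v ⬝ᵥ w; w ⬝ᵥ u, w ⬝ᵥ v, w ⬝ᵥ w] := by
    ext i j
    fin_cases i <;> fin_cases j <;> rfl
  calc (u ⬝ᵥ v ⨯₃ w) ^ 2 = (M * Mᵀ).det := by
        rw [det_mul, det_transpose, ← sq, triple_product_eq_det]
        rfl
    _ = _ := by
        rw [hgram, det_fin_three]
        simp only [of_apply, cons_val', cons_val_zero, cons_val_one, cons_val_two, empty_val',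
          cons_val_fin_one, tail_cons, vecHead, dotProduct_comm v u, dotProduct_comm w u,
          dotProduct_comm w v]
        ring

/-- With `J²Δ(t) := (1-t)t(J·J) + t(n·J)(k·J) - ((n+k)·J)²/4`, at
`t = ξ²₊ = (1+(n·k))/2` one has `J²Δ = ¼ (J·(n ∧ k))²`. -/
theorem stmt13 (J n k : Fin 3 → ℝ) (hn : n ⬝ᵥ n = 1) (hk : k ⬝ᵥ k = 1) :
    ∀ t : ℝ, t = (1 + n ⬝ᵥ k) / 2 →
      (1 - t) * t * (J ⬝ᵥ J) + t * (n ⬝ᵥ J) * (k ⬝ᵥ J) - ((n + k) ⬝ᵥ J) ^ 2 / 4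
        = (J ⬝ᵥ (n ⨯₃ k)) ^ 2 / 4 := by
  rintro t rfl
  rw [sq_dotProduct_cross_eq_gram, hn, hk, add_dotProduct, dotProduct_comm J n,
    dotProduct_comm J k]
  ring
end

section
/- Let J₁, J₂, J₃ ∈ ℝ³ with J₁ + J₂ + J₃ = 0, let n, k be unit vectors, and set S = J₁ ∧ J₂. Then (J₂·(n∧k))(J₃·(n∧k))[(n∧J₁)·(k∧J₁)] + (J₃·(n∧k))(J₁·(n∧k))[(n∧J₂)·(k∧J₂)] + (J₁·(n∧k))(J₂·(n∧k))[(n∧J₃)·(k∧J₃)] = −(n·S)(k·S)(n∧k)². -/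
open Matrix

/-- For `J₁ + J₂ + J₃ = 0`, unit vectors `n, k`, and `S = J₁ ∧ J₂`:
the cyclic sum `Σ (J_b·(n∧k))(J_c·(n∧k))[(n∧J_a)·(k∧J_a)]` over cyclic
permutations `(a,b,c)` of `(1,2,3)` equals `-(n·S)(k·S)(n∧k)²`. -/
theorem stmt15 (J₁ J₂ J₃ n k : Fin 3 → ℝ)
    (hclose : J₁ + J₂ + J₃ = 0)
    (hn : n ⬝ᵥ n = 1) (hk : k ⬝ᵥ k = 1)
    (S : Fin 3 → ℝ) (hS : S = J₁ ⨯₃ J₂) :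
    (J₂ ⬝ᵥ (n ⨯₃ k)) * (J₃ ⬝ᵥ (n ⨯₃ k)) * ((n ⨯₃ J₁) ⬝ᵥ (k ⨯₃ J₁))
      + (J₃ ⬝ᵥ (n ⨯₃ k)) * (J₁ ⬝ᵥ (n ⨯₃ k)) * ((n ⨯₃ J₂) ⬝ᵥ (k ⨯₃ J₂))
      + (J₁ ⬝ᵥ (n ⨯₃ k)) * (J₂ ⬝ᵥ (n ⨯₃ k)) * ((n ⨯₃ J₃) ⬝ᵥ (k ⨯₃ J₃))
      = -((n ⬝ᵥ S) * (k ⬝ᵥ S) * ((n ⨯₃ k) ⬝ᵥ (n ⨯₃ k))) := by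
  have hJ3 : J₃ = -J₁ - J₂ := by
    have := hclose
    funext i
    have h := congrFun hclose i
    simp at h ⊢
    linarith
  subst hS hJ3
  simp only [crossProduct, dotProduct, Fin.sum_univ_three, LinearMap.mk₂_apply,
    Matrix.cons_val_zero, Matrix.cons_val_one, Matrix.head_cons, Pi.sub_apply,
    Pi.neg_apply, Matrix.cons_val_two, Matrix.tail_cons]
  ring
end

section
/- For real x ∈ (0,1) and ξ ∈ (0,1), the function g(x) = x ln ξ² + (1−x)ln(1−ξ²) + (1+x)ln(1+x) − (1−x)ln(1−x) − 2x ln(2x) attains its maximum on (0,1) at x* = ξ/√(4−3ξ²), and the maximum value is ln[(ξ + √(4−3ξ²))²/4], which is strictly positive. -/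
/-!
With `s = √(4 - 3ξ²)`, the derivative of `g` is `ln (ξ²(1 - x²)) - ln ((1 - ξ²)(2x)²)`, and
`ξ²(1 - x²) - (1 - ξ²)(2x)² = (ξ - xs)(ξ + xs)`, so `g` increases on `(0, ξ/s]` and decreases
on `[ξ/s, 1)`. Since `g(x) = x g'(x) + ln ((1 - ξ²)(1 + x)/(1 - x))` and
`1 - ξ² = (s - ξ)(s + ξ)/4`, the value at the critical point is `ln ((ξ + s)²/4)`, which is
positive because `s > 2 - ξ`.
-/

open Real Set

theorem isMaxOn_of_hasDerivAt_of_sign {D : Set ℝ} (hD : Convex ℝ D) {f f' : ℝ → ℝ} {c : ℝ}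
    (hc : c ∈ D) (hf : ∀ x ∈ D, HasDerivAt f (f' x) x)
    (hle : ∀ x ∈ D, x ≤ c → 0 ≤ f' x) (hge : ∀ x ∈ D, c ≤ x → f' x ≤ 0) :
    IsMaxOn f D c := by
  have hcont : ContinuousOn f D := fun x hx => (hf x hx).continuousAt.continuousWithinAt
  intro y hy
  rcases le_total y c with hyc | hcy
  · have hmono : MonotoneOn f (D ∩ Iic c) :=
      monotoneOn_of_hasDerivWithinAt_nonneg (hD.inter (convex_Iic c))
        (hcont.mono inter_subset_left)
        (fun x hx => (hf x (interior_subset hx).1).hasDerivWithinAt)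
        (fun x hx => hle x (interior_subset hx).1 (interior_subset hx).2)
    exact hmono ⟨hy, hyc⟩ ⟨hc, self_mem_Iic⟩ hyc
  · have hanti : AntitoneOn f (D ∩ Ici c) :=
      antitoneOn_of_hasDerivWithinAt_nonpos (hD.inter (convex_Ici c))
        (hcont.mono inter_subset_left)
        (fun x hx => (hf x (interior_subset hx).1).hasDerivWithinAt)
        (fun x hx => hge x (interior_subset hx).1 (interior_subset hx).2)
    exact hanti ⟨hc, self_mem_Ici⟩ ⟨hy, hcy⟩ hcy

namespace LogObjective

-- `g` of the statement is `objective (ln ξ²) (ln (1 - ξ²))`.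
noncomputable def objective (a b x : ℝ) : ℝ :=
  x * a + (1 - x) * b + (1 + x) * log (1 + x) - (1 - x) * log (1 - x) - 2 * x * log (2 * x)

noncomputable def slope (a b x : ℝ) : ℝ :=
  a - b + log (1 + x) + log (1 - x) - 2 * log (2 * x)

theorem hasDerivAt_objective (a b : ℝ) {x : ℝ} (hx : x ∈ Ioo (-1 : ℝ) 1) (hx0 : x ≠ 0) :
    HasDerivAt (objective a b) (slope a b x) x := by
  have hlin : HasDerivAt (fun y => y * a + (1 - y) * b) (a - b) x :=
    (((hasDerivAt_id' x).mul_const a).add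
      (((hasDerivAt_id' x).const_sub 1).mul_const b)).congr_deriv (by ring)
  have hp := (hasDerivAt_mul_log (by linarith [hx.1] : 1 + x ≠ 0)).comp x
    ((hasDerivAt_id' x).const_add 1)
  have hm := (hasDerivAt_mul_log (by linarith [hx.2] : 1 - x ≠ 0)).comp x
    ((hasDerivAt_id' x).const_sub 1)
  have h2 := (hasDerivAt_mul_log (by simpa using hx0 : 2 * x ≠ 0)).comp x
    ((hasDerivAt_id' x).const_mul 2)
  exact (((hlin.add hp).sub hm).sub h2).congr_deriv (by simp only [slope]; ring)

theorem objective_eq_mul_slope_add (a b x : ℝ) :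
    objective a b x = x * slope a b x + (b + log (1 + x) - log (1 - x)) := by
  simp only [objective, slope]; ring

variable {ξ s x : ℝ}

theorem slope_eq_log_sub_log (hξ : ξ ∈ Ioo (0 : ℝ) 1) (hx : x ∈ Ioo (0 : ℝ) 1) :
    slope (log (ξ ^ 2)) (log (1 - ξ ^ 2)) x
      = log (ξ ^ 2 * ((1 + x) * (1 - x))) - log ((1 - ξ ^ 2) * (2 * x) ^ 2) := by
  obtain ⟨hξ0, hξ1⟩ := hξ
  obtain ⟨hx0, hx1⟩ := hx
  have hξ2 : 1 - ξ ^ 2 ≠ 0 := by nlinarith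
  rw [log_mul (by positivity) (by nlinarith), log_mul (by linarith) (by linarith),
    log_mul hξ2 (by positivity), log_pow, log_pow]
  simp only [slope]
  push_cast
  ring

theorem slope_log_args_sub_eq (hs : s ^ 2 = 4 - 3 * ξ ^ 2) :
    ξ ^ 2 * ((1 + x) * (1 - x)) - (1 - ξ ^ 2) * (2 * x) ^ 2 = (ξ - x * s) * (ξ + x * s) := by
  linear_combination x ^ 2 * hs

theorem slope_nonneg_iff (hξ : ξ ∈ Ioo (0 : ℝ) 1) (hs0 : 0 < s) (hs : s ^ 2 = 4 - 3 * ξ ^ 2)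
    (hx : x ∈ Ioo (0 : ℝ) 1) :
    0 ≤ slope (log (ξ ^ 2)) (log (1 - ξ ^ 2)) x ↔ x * s ≤ ξ := by
  have hξ2 : 0 < 1 - ξ ^ 2 := by nlinarith [hξ.1, hξ.2]
  have hpos : 0 < ξ + x * s := by nlinarith [hξ.1, hx.1]
  have hA : 0 < ξ ^ 2 * ((1 + x) * (1 - x)) :=
    mul_pos (pow_pos hξ.1 2) (mul_pos (by linarith [hx.1]) (by linarith [hx.2]))
  rw [slope_eq_log_sub_log hξ hx, sub_nonneg,
    log_le_log_iff (by have := hx.1; positivity) hA,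
    ← sub_nonneg, slope_log_args_sub_eq hs, mul_nonneg_iff_of_pos_right hpos, sub_nonneg]

theorem slope_nonpos_iff (hξ : ξ ∈ Ioo (0 : ℝ) 1) (hs0 : 0 < s) (hs : s ^ 2 = 4 - 3 * ξ ^ 2)
    (hx : x ∈ Ioo (0 : ℝ) 1) :
    slope (log (ξ ^ 2)) (log (1 - ξ ^ 2)) x ≤ 0 ↔ ξ ≤ x * s := by
  have hξ2 : 0 < 1 - ξ ^ 2 := by nlinarith [hξ.1, hξ.2]
  have hpos : 0 < ξ + x * s := by nlinarith [hξ.1, hx.1]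
  have hA : 0 < ξ ^ 2 * ((1 + x) * (1 - x)) :=
    mul_pos (pow_pos hξ.1 2) (mul_pos (by linarith [hx.1]) (by linarith [hx.2]))
  rw [slope_eq_log_sub_log hξ hx, sub_nonpos,
    log_le_log_iff hA (by have := hx.1; positivity),
    ← sub_nonpos, slope_log_args_sub_eq hs, ← neg_nonneg, ← neg_mul,
    mul_nonneg_iff_of_pos_right hpos, neg_nonneg, sub_nonpos]

theorem div_mem_Ioo_of_sq_eq (hξ : ξ ∈ Ioo (0 : ℝ) 1) (hs0 : 0 < s)
    (hs : s ^ 2 = 4 - 3 * ξ ^ 2) : ξ / s ∈ Ioo (0 : ℝ) 1 :=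
  ⟨div_pos hξ.1 hs0, (div_lt_one hs0).2 (by nlinarith [hξ.1, hξ.2])⟩

theorem slope_div_eq_zero (hξ : ξ ∈ Ioo (0 : ℝ) 1) (hs0 : 0 < s) (hs : s ^ 2 = 4 - 3 * ξ ^ 2) :
    slope (log (ξ ^ 2)) (log (1 - ξ ^ 2)) (ξ / s) = 0 := by
  have hx := div_mem_Ioo_of_sq_eq hξ hs0 hs
  have hxs : ξ / s * s = ξ := div_mul_cancel₀ ξ hs0.ne'
  exact le_antisymm ((slope_nonpos_iff hξ hs0 hs hx).2 hxs.ge)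
    ((slope_nonneg_iff hξ hs0 hs hx).2 hxs.le)

theorem log_one_sub_sq_add_log_sub_log (hξ : ξ ∈ Ioo (0 : ℝ) 1) (hs0 : 0 < s)
    (hs : s ^ 2 = 4 - 3 * ξ ^ 2) :
    log (1 - ξ ^ 2) + log (1 + ξ / s) - log (1 - ξ / s) = log ((ξ + s) ^ 2 / 4) := by
  obtain ⟨hx0, hx1⟩ := div_mem_Ioo_of_sq_eq hξ hs0 hs
  have hsξ : 0 < s - ξ := by nlinarith [hξ.1, hξ.2]
  have hξ2 : 0 < 1 - ξ ^ 2 := by nlinarith [hξ.1, hξ.2]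
  rw [← log_mul hξ2.ne' (by linarith), ← log_div (by positivity) (by linarith)]
  congr 1
  field_simp
  linear_combination (-s - ξ) * hs

theorem one_lt_sq_add_div_four (hξ : ξ ∈ Ioo (0 : ℝ) 1) (hs0 : 0 < s)
    (hs : s ^ 2 = 4 - 3 * ξ ^ 2) : 1 < (ξ + s) ^ 2 / 4 := by
  have : 2 - ξ < s := by nlinarith [hξ.1, hξ.2]
  rw [lt_div_iff₀ four_pos]
  nlinarith [hξ.1, hξ.2]

end LogObjective

open LogObjective in
/-- `g(x) = x ln ξ² + (1-x)ln(1-ξ²) + (1+x)ln(1+x) - (1-x)ln(1-x) - 2x ln(2x)`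
attains its maximum on `(0,1)` at `x* = ξ/√(4-3ξ²)`, with maximum value
`ln[(ξ + √(4-3ξ²))²/4] > 0`. -/
theorem stmt19 (ξ : ℝ) (hξ : ξ ∈ Set.Ioo (0 : ℝ) 1)
    (g : ℝ → ℝ)
    (hg : ∀ x : ℝ, g x = x * Real.log (ξ ^ 2) + (1 - x) * Real.log (1 - ξ ^ 2)
        + (1 + x) * Real.log (1 + x) - (1 - x) * Real.log (1 - x)
        - 2 * x * Real.log (2 * x)) :
    ξ / Real.sqrt (4 - 3 * ξ ^ 2) ∈ Set.Ioo (0 : ℝ) 1 ∧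
    IsMaxOn g (Set.Ioo (0 : ℝ) 1) (ξ / Real.sqrt (4 - 3 * ξ ^ 2)) ∧
    g (ξ / Real.sqrt (4 - 3 * ξ ^ 2))
      = Real.log ((ξ + Real.sqrt (4 - 3 * ξ ^ 2)) ^ 2 / 4) ∧
    0 < Real.log ((ξ + Real.sqrt (4 - 3 * ξ ^ 2)) ^ 2 / 4) := by
  have hdisc : 0 < 4 - 3 * ξ ^ 2 := by nlinarith [hξ.1, hξ.2]
  set s := √(4 - 3 * ξ ^ 2)
  have hs0 : 0 < s := sqrt_pos.2 hdisc
  have hs : s ^ 2 = 4 - 3 * ξ ^ 2 := sq_sqrt hdisc.le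
  have hc := div_mem_Ioo_of_sq_eq hξ hs0 hs
  obtain rfl : g = objective (log (ξ ^ 2)) (log (1 - ξ ^ 2)) := funext hg
  refine ⟨hc, ?_, ?_, log_pos (one_lt_sq_add_div_four hξ hs0 hs)⟩
  · exact isMaxOn_of_hasDerivAt_of_sign (convex_Ioo 0 1) hc
      (fun x hx => hasDerivAt_objective _ _ ⟨by linarith [hx.1], hx.2⟩ hx.1.ne')
      (fun x hx hxc => (slope_nonneg_iff hξ hs0 hs hx).2 ((le_div_iff₀ hs0).1 hxc))
      (fun x hx hxc => (slope_nonpos_iff hξ hs0 hs hx).2 ((div_le_iff₀ hs0).1 hxc))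
  · rw [objective_eq_mul_slope_add, slope_div_eq_zero hξ hs0 hs, mul_zero, zero_add]
    exact log_one_sub_sq_add_log_sub_log hξ hs0 hs
end
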